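/- (Q2 Margolis homology of tmf, Eq. (5).) Let Q2 : A → A be the F2-linear derivation determined by Q2(ζn) = ζ_{n−3}^8. Then Q2 restricts to T with Q2 ∘ Q2 = 0, the subalgebra F2[ζ2^4, ζ3^2, ζ4^2, ζ5^2, …] is contained in ker(Q2|T), and the induced F2-algebra map F2[ζ2^4, ζ3^2, ζ4^2, …] → M(T, Q2) = ker(Q2|T)/im(Q2|T) is surjective with kernel the ideal generated by {ζ2^8} ∪ {ζi^8 : i ≥ 3}; hence M(T, Q2) ≅ F2[ζ2^4, ζ3^2, ζ4^2, …]/(ζ2^8, ζ3^8, ζ4^8, …) as F2-algebras. -/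

import Mathlib

/-!
Common setup: the mod-2 dual Steenrod algebra model.
`A = F₂[ζ₁, ζ₂, …]` with variables indexed by `ℕ+`, conventions `ζ₀ = 1`, `ζₘ = 0` for `m < 0`.
`T = F₂[ζ₁⁸, ζ₂⁴, ζ₃², ζ₄, ζ₅, …]` (model for `H₋(tmf; F₂)`).
`Q1` is the derivation with `Q1 ζₙ = ζₙ₋₂⁴` and `P` (the right action of `P₂¹`) is the linear
map defined on monomials `ζ_{i₁} ⋯ ζ_{iₙ}` (repetitions allowed) by the sum over pairs of
factor positions `j < k` of the monomial with the `j`-th factor replaced by `ζ_{i_j-2}⁴` and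
the `k`-th factor replaced by `ζ_{i_k-2}⁴`.
-/

open MvPolynomial

noncomputable section

namespace Tmf

abbrev F : Type := ZMod 2

abbrev A : Type := MvPolynomial ℕ+ F

/-- `ζ n`, with the conventions `ζ 0 = 1` and `ζ m = 0` for `m < 0`. -/
def z (n : ℤ) : A :=
  if 0 < n then X n.toNat.toPNat' else if n = 0 then 1 else 0

/-- The Milnor primitive `Q₁`, the `F₂`-linear derivation with `Q₁(ζₙ) = ζₙ₋₂⁴`. -/
def Q1 : A →ₗ[F] A :=
  (mkDerivation F fun n : ℕ+ => z ((n : ℤ) - 2) ^ 4).toLinearMap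

/-- The value of (the right action of) `P₂¹` on the monomial with exponents `d`:
the sum over unordered pairs of factor positions of the result of replacing each of the two
chosen factors `ζ_i` by `ζ_{i-2}⁴`.  Pairs of positions carrying the same variable `ζ_n`
contribute `C(dₙ, 2)` equal terms, pairs with distinct variables `n < m` contribute
`dₙ · dₘ` equal terms. -/
def Pval (d : ℕ+ →₀ ℕ) : A :=
  (∑ n ∈ d.support, (((d n).choose 2 : ℕ) : F) •
      (monomial (d - Finsupp.single n 2) 1 * z ((n : ℤ) - 2) ^ 8)) +
  ∑ p ∈ (d.support ×ˢ d.support).filter fun p => p.1 < p.2,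
      ((d p.1 * d p.2 : ℕ) : F) •
      (monomial (d - Finsupp.single p.1 1 - Finsupp.single p.2 1) 1 *
        z ((p.1 : ℤ) - 2) ^ 4 * z ((p.2 : ℤ) - 2) ^ 4)

/-- The (right action of) `P₂¹` as an `F₂`-linear map on `A`, defined on the monomial basis. -/
def P : A →ₗ[F] A :=
  (basisMonomials ℕ+ F).constr F Pval

/-- `T = F₂[ζ₁⁸, ζ₂⁴, ζ₃², ζ₄, ζ₅, …] ⊆ A`, a model for `H₋(tmf; F₂)`. -/
def T : Subalgebra F A :=
  Algebra.adjoin F ({z 1 ^ 8, z 2 ^ 4, z 3 ^ 2} ∪ {a | ∃ n : ℤ, 4 ≤ n ∧ a = z n})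


/-- The Milnor primitive `Q₂`, the `F₂`-linear derivation with `Q₂(ζₙ) = ζₙ₋₃⁸`. -/
def Q2 : A →ₗ[F] A :=
  (mkDerivation F fun n : ℕ+ => z ((n : ℤ) - 3) ^ 8).toLinearMap

/-- The subalgebra `F₂[ζ₂⁴, ζ₃², ζ₄², ζ₅², …] ⊆ A`. -/
def C2 : Subalgebra F A :=
  Algebra.adjoin F ({z 2 ^ 4} ∪ {a | ∃ n : ℤ, 3 ≤ n ∧ a = z n ^ 2})

/-!
On a monomial `ζ^d` of `T` the derivation acts by `Q₂ ζ^d = ∑ ζ^(d - e_{j+3} + 8 e_j)`, the sum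
running over the `j` with `d_{j+3}` odd. Call `ζ^d` paired at `j` if `d_{j+3}` is odd or
`d_j ≥ 8`. The contracting homotopy `h` looks at the least position `J` where `ζ^d` is paired and
sends `ζ^d` to `ζ^(d - 8 e_J + e_{J+3})` if `d_{J+3}` is even, to `0` otherwise. Then
`Q₂ h + h Q₂ = 1 + R` on `T`, where `R` keeps exactly the monomials paired nowhere; these lie
in `C2`, so every cycle is homologous to an element of `C2`. Every monomial of `Q₂ ζ^d` is paired
(it is divisible by `ζ_j⁸`), so `R` kills boundaries, and an element `c` of `C2` with `R c = 0`
is a combination of monomials of `C2` divisible by some `ζ_j⁸`, `j ≥ 2`.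
-/

end Tmf

namespace MvPolynomial

variable {σ R : Type*} [CommSemiring R]

theorem map_mem_of_forall_monomial_mem {M : Type*} [AddCommMonoid M] [Module R M]
    (L : MvPolynomial σ R →ₗ[R] M) (N : Submodule R M) {p : MvPolynomial σ R}
    (h : ∀ d ∈ p.support, L (monomial d 1) ∈ N) : L p ∈ N := by
  rw [p.as_sum, map_sum]
  refine Submodule.sum_mem _ fun d hd => ?_
  rw [show monomial d (coeff d p) = coeff d p • monomial d (1 : R) by
    rw [smul_monomial, smul_eq_mul, mul_one], map_smul]
  exact N.smul_mem _ (h d hd)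

theorem eq_of_forall_monomial_eq {M : Type*} [AddCommGroup M] [Module R M]
    (L₁ L₂ : MvPolynomial σ R →ₗ[R] M) {p : MvPolynomial σ R}
    (h : ∀ d ∈ p.support, L₁ (monomial d 1) = L₂ (monomial d 1)) : L₁ p = L₂ p := by
  refine sub_eq_zero.1 ((Submodule.mem_bot R).1 ?_)
  rw [← LinearMap.sub_apply]
  exact map_mem_of_forall_monomial_mem _ ⊥ fun d hd => by simp [h d hd]

theorem constr_basisMonomials_monomial {M : Type*} [AddCommMonoid M] [Module R M]
    (f : (σ →₀ ℕ) → M) (d : σ →₀ ℕ) :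
    (basisMonomials σ R).constr R f (monomial d 1) = f d := by
  rw [show monomial d (1 : R) = basisMonomials σ R d by rw [coe_basisMonomials],
    Module.Basis.constr_basis]

theorem mem_adjoin_range_X_pow_iff (w : σ → ℕ) {p : MvPolynomial σ R} :
    p ∈ Algebra.adjoin R (Set.range fun n => X n ^ w n) ↔ ∀ d ∈ p.support, ∀ n, w n ∣ d n := by
  classical
  constructor
  · intro hp
    induction hp using Algebra.adjoin_induction with
    | mem p hp =>
      obtain ⟨m, rfl⟩ := hp
      intro d hd n
      dsimp only at hd
      rw [X_pow_eq_monomial (R := R)] at hd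
      rw [Finset.mem_singleton.1 (support_monomial_subset hd), Finsupp.single_apply]
      split_ifs with h
      · rw [h]
      · exact dvd_zero _
    | algebraMap r =>
      intro d hd n
      rw [algebraMap_eq, C_apply] at hd
      rw [Finset.mem_singleton.1 (support_monomial_subset hd)]
      exact dvd_zero _
    | add p q _ _ hp hq =>
      intro d hd
      rcases Finset.mem_union.1 (support_add hd) with hd | hd
      exacts [hp d hd, hq d hd]
    | mul p q _ _ hp hq =>
      intro d hd n
      obtain ⟨a, ha, b, hb, rfl⟩ := Finset.mem_add.1 (support_mul p q hd)
      exact dvd_add (hp a ha n) (hq b hb n)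
  · intro h
    refine map_mem_of_forall_monomial_mem LinearMap.id
      (Algebra.adjoin R (Set.range fun n => X n ^ w n)).toSubmodule fun d hd => ?_
    rw [LinearMap.id_apply, monomial_eq, C_1, one_mul]
    refine Subalgebra.prod_mem _ fun n _ => ?_
    dsimp only
    obtain ⟨k, hk⟩ := h d hd n
    rw [hk, pow_mul]
    exact pow_mem (Algebra.subset_adjoin (Set.mem_range_self n)) k

end MvPolynomial

theorem Derivation.apply_apply_eq_zero_of_adjoin_eq_top {R A : Type*} [CommSemiring R]
    [CommRing A] [Algebra R A] [CharP A 2] (D : Derivation R A A) {s : Set A}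
    (hs : Algebra.adjoin R s = ⊤) (h : ∀ x ∈ s, D (D x) = 0) (a : A) : D (D a) = 0 := by
  have ha : a ∈ Algebra.adjoin R s := hs ▸ Algebra.mem_top
  induction ha using Algebra.adjoin_induction with
  | mem x hx => exact h x hx
  | algebraMap r => rw [D.map_algebraMap, map_zero]
  | add x y _ _ hx hy => rw [map_add, map_add, hx, hy, add_zero]
  | mul x y _ _ hx hy =>
    simp only [D.leibniz, smul_eq_mul, map_add, hx, hy, mul_zero, zero_add]
    rw [mul_comm, CharTwo.add_self_eq_zero]

namespace Tmf

open MvPolynomial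

theorem eq_one_or_eq_two_or_eq_three_or_exists_add_three (n : ℕ+) :
    n = 1 ∨ n = 2 ∨ n = 3 ∨ ∃ m : ℕ+, n = m + 3 := by
  rcases n with ⟨_ | _ | _ | _ | k, hk⟩
  · omega
  · exact Or.inl rfl
  · exact Or.inr (Or.inl rfl)
  · exact Or.inr (Or.inr (Or.inl rfl))
  · exact Or.inr (Or.inr (Or.inr ⟨k.succPNat, rfl⟩))

theorem add_three_ne_self (j : ℕ+) : j + 3 ≠ j := (PNat.lt_add_right j 3).ne'

theorem exists_pnat_coe_eq {n : ℤ} (hn : 0 < n) : ∃ m : ℕ+, (m : ℤ) = n :=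
  ⟨⟨n.toNat, by omega⟩, by simp; omega⟩

theorem z_coe (n : ℕ+) : z n = X n := by
  rw [z, if_pos (by simp)]
  congr
  simp

theorem z_one : z 1 = X 1 := by simpa using z_coe 1

theorem z_two : z 2 = X 2 := by simpa using z_coe 2

theorem z_three : z 3 = X 3 := by simpa using z_coe 3

theorem z_mem_T {n : ℤ} (hn : 4 ≤ n) : z n ∈ T := Algebra.subset_adjoin (Or.inr ⟨n, hn, rfl⟩)

def tWeight (n : ℕ+) : ℕ := if n = 1 then 8 else if n = 2 then 4 else if n = 3 then 2 else 1

/-- The weight `0` at `n = 1` excludes `ζ₁`: `0 ∣ k` only for `k = 0`. -/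
def c2Weight (n : ℕ+) : ℕ := if n = 1 then 0 else if n = 2 then 4 else 2

theorem tWeight_add_three (m : ℕ+) : tWeight (m + 3) = 1 := by
  simp [tWeight, ← PNat.coe_inj]

theorem c2Weight_add_three (m : ℕ+) : c2Weight (m + 3) = 2 := by
  simp [c2Weight, ← PNat.coe_inj]

theorem tWeight_dvd_eight (n : ℕ+) : tWeight n ∣ 8 := by
  unfold tWeight; split_ifs <;> norm_num

theorem c2Weight_dvd_eight {n : ℕ+} (hn : n ≠ 1) : c2Weight n ∣ 8 := by
  unfold c2Weight; split_ifs <;> first | contradiction | norm_num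

theorem tWeight_dvd_c2Weight (n : ℕ+) : tWeight n ∣ c2Weight n := by
  rcases eq_one_or_eq_two_or_eq_three_or_exists_add_three n with rfl | rfl | rfl | ⟨m, rfl⟩
  · exact dvd_zero _
  · exact dvd_rfl
  · exact dvd_rfl
  · rw [tWeight_add_three]; exact one_dvd _

theorem T_eq_adjoin : T = Algebra.adjoin F (Set.range fun n => X n ^ tWeight n) := by
  apply le_antisymm <;> refine Algebra.adjoin_le ?_
  · rintro x (hx | ⟨n, hn, rfl⟩)
    · simp only [Set.mem_insert_iff, Set.mem_singleton_iff] at hx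
      rcases hx with rfl | rfl | rfl
      · exact Algebra.subset_adjoin ⟨1, by simp [tWeight, z_one]⟩
      · exact Algebra.subset_adjoin ⟨2, by simp [tWeight, z_two]⟩
      · exact Algebra.subset_adjoin ⟨3, by simp [tWeight, z_three]⟩
    · obtain ⟨m, hm⟩ := exists_pnat_coe_eq (n := n - 3) (by omega)
      refine Algebra.subset_adjoin ⟨m + 3, ?_⟩
      dsimp only
      rw [tWeight_add_three, pow_one, ← z_coe]
      congr 1
      push_cast
      omega
  · rintro _ ⟨n, rfl⟩
    rcases eq_one_or_eq_two_or_eq_three_or_exists_add_three n with rfl | rfl | rfl | ⟨m, rfl⟩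
    · exact Algebra.subset_adjoin (by simp [tWeight, z_one])
    · exact Algebra.subset_adjoin (by simp [tWeight, z_two])
    · exact Algebra.subset_adjoin (by simp [tWeight, z_three])
    · show X (m + 3) ^ tWeight (m + 3) ∈ T
      rw [tWeight_add_three, pow_one, ← z_coe]
      exact z_mem_T (by have := m.pos; push_cast; omega)

theorem C2_eq_adjoin : C2 = Algebra.adjoin F (Set.range fun n => X n ^ c2Weight n) := by
  apply le_antisymm <;> refine Algebra.adjoin_le ?_
  · rintro x (hx | ⟨n, hn, rfl⟩)
    · rw [Set.mem_singleton_iff.1 hx]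
      exact Algebra.subset_adjoin ⟨2, by simp [c2Weight, z_two]⟩
    · obtain ⟨m, rfl⟩ := exists_pnat_coe_eq (n := n) (by omega)
      rcases eq_one_or_eq_two_or_eq_three_or_exists_add_three m with rfl | rfl | rfl | ⟨k, rfl⟩
      · norm_num at hn
      · norm_num at hn
      · exact Algebra.subset_adjoin ⟨3, by simp [c2Weight, z_three]⟩
      · exact Algebra.subset_adjoin ⟨k + 3, by dsimp only; rw [c2Weight_add_three, z_coe]⟩
  · rintro _ ⟨n, rfl⟩
    rcases eq_one_or_eq_two_or_eq_three_or_exists_add_three n with rfl | rfl | rfl | ⟨m, rfl⟩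
    · simp [c2Weight]
    · exact Algebra.subset_adjoin (by simp [c2Weight, z_two])
    · exact Algebra.subset_adjoin (Or.inr ⟨3, le_rfl, by simp [c2Weight, z_three]⟩)
    · show X (m + 3) ^ c2Weight (m + 3) ∈ C2
      rw [c2Weight_add_three, ← z_coe]
      exact Algebra.subset_adjoin (Or.inr ⟨_, by push_cast; omega, rfl⟩)

theorem mem_T_iff {x : A} : x ∈ T ↔ ∀ d ∈ x.support, ∀ n, tWeight n ∣ d n := by
  rw [T_eq_adjoin, mem_adjoin_range_X_pow_iff]

theorem mem_C2_iff {x : A} : x ∈ C2 ↔ ∀ d ∈ x.support, ∀ n, c2Weight n ∣ d n := by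
  rw [C2_eq_adjoin, mem_adjoin_range_X_pow_iff]

theorem monomial_one_mem_T {d : ℕ+ →₀ ℕ} (hd : ∀ n, tWeight n ∣ d n) : monomial d 1 ∈ T :=
  mem_T_iff.2 fun e he => by rwa [Finset.mem_singleton.1 (support_monomial_subset he)]

theorem monomial_one_mem_C2 {d : ℕ+ →₀ ℕ} (hd : ∀ n, c2Weight n ∣ d n) : monomial d 1 ∈ C2 :=
  mem_C2_iff.2 fun e he => by rwa [Finset.mem_singleton.1 (support_monomial_subset he)]

theorem C2_le_T : C2 ≤ T := fun _ hx =>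
  mem_T_iff.2 fun d hd n => (tWeight_dvd_c2Weight n).trans (mem_C2_iff.1 hx d hd n)

def derivationQ2 : Derivation F A A := mkDerivation F fun n : ℕ+ => z ((n : ℤ) - 3) ^ 8

theorem Q2_apply_X (n : ℕ+) : Q2 (X n) = z (n - 3) ^ 8 := mkDerivation_X _ _ _

theorem Q2_mul (a b : A) : Q2 (a * b) = a * Q2 b + b * Q2 a := derivationQ2.leibniz a b

theorem Q2_Q2 (x : A) : Q2 (Q2 x) = 0 := by
  refine derivationQ2.apply_apply_eq_zero_of_adjoin_eq_top adjoin_range_X ?_ x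
  rintro _ ⟨n, rfl⟩
  change Q2 (Q2 (X n)) = 0
  rw [Q2_apply_X, show z (n - 3) ^ 8 = z (n - 3) ^ 4 * z (n - 3) ^ 4 by ring, Q2_mul,
    CharTwo.add_self_eq_zero]

theorem Q2_mul_z_add_three {f : A} (hf : Q2 f = 0) {g : ℤ} (hg : 0 ≤ g) :
    Q2 (f * z (g + 3)) = f * z g ^ 8 := by
  obtain ⟨m, hm⟩ := exists_pnat_coe_eq (n := g + 3) (by omega)
  rw [Q2_mul, hf, mul_zero, add_zero, ← hm, z_coe, Q2_apply_X, hm, add_sub_cancel_right]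

/-- The exponent of the term of `Q₂ ζ^d` coming from the factor `ζ_{j+3}`. -/
def qStep (j : ℕ+) (d : ℕ+ →₀ ℕ) : ℕ+ →₀ ℕ := d - Finsupp.single (j + 3) 1 + Finsupp.single j 8

def hStep (j : ℕ+) (d : ℕ+ →₀ ℕ) : ℕ+ →₀ ℕ := d - Finsupp.single j 8 + Finsupp.single (j + 3) 1

section Steps

variable (j : ℕ+) (d : ℕ+ →₀ ℕ) {x : ℕ+}

@[simp] theorem qStep_apply_self : qStep j d j = d j + 8 := by
  simp [qStep, add_three_ne_self]

@[simp] theorem qStep_apply_add_three : qStep j d (j + 3) = d (j + 3) - 1 := by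
  simp [qStep, add_three_ne_self]

theorem qStep_apply_of_ne (h₁ : x ≠ j) (h₂ : x ≠ j + 3) : qStep j d x = d x := by
  simp [qStep, h₁.symm, h₂.symm]

@[simp] theorem hStep_apply_self : hStep j d j = d j - 8 := by
  simp [hStep, add_three_ne_self]

theorem hStep_apply_add_three : hStep j d (j + 3) = d (j + 3) + 1 := by
  simp [hStep, add_three_ne_self]

theorem hStep_apply_of_ne (h₁ : x ≠ j) (h₂ : x ≠ j + 3) : hStep j d x = d x := by
  simp [hStep, h₁.symm, h₂.symm]

end Steps

theorem hStep_qStep_comm {i j : ℕ+} (h : i ≠ j) (d : ℕ+ →₀ ℕ) :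
    hStep i (qStep j d) = qStep j (hStep i d) := by
  ext x
  simp only [hStep, qStep, Finsupp.add_apply, Finsupp.tsub_apply, Finsupp.single_apply]
  split_ifs <;> subst_vars <;> simp_all [← PNat.coe_inj]; omega

theorem hStep_qStep {j : ℕ+} {d : ℕ+ →₀ ℕ} (h : 1 ≤ d (j + 3)) : hStep j (qStep j d) = d := by
  ext x
  simp only [hStep, qStep, Finsupp.add_apply, Finsupp.tsub_apply, Finsupp.single_apply]
  split_ifs <;> subst_vars <;> simp_all [← PNat.coe_inj]

theorem qStep_hStep {j : ℕ+} {d : ℕ+ →₀ ℕ} (h : 8 ≤ d j) : qStep j (hStep j d) = d := by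
  ext x
  simp only [hStep, qStep, Finsupp.add_apply, Finsupp.tsub_apply, Finsupp.single_apply]
  split_ifs <;> subst_vars <;> simp_all [← PNat.coe_inj]

theorem odd_qStep_apply_iff {j x : ℕ+} (d : ℕ+ →₀ ℕ) (h : x ≠ j + 3) :
    Odd (qStep j d x) ↔ Odd (d x) := by
  by_cases hx : x = j
  · subst hx; simp [Nat.odd_add, Nat.even_iff]
  · rw [qStep_apply_of_ne j d hx h]

theorem odd_hStep_apply_iff {j x : ℕ+} {d : ℕ+ →₀ ℕ} (h : x ≠ j + 3) (h8 : 8 ≤ d j) :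
    Odd (hStep j d x) ↔ Odd (d x) := by
  by_cases hx : x = j
  · subst hx; rw [hStep_apply_self, Nat.odd_sub h8]; simp [Nat.even_iff]
  · rw [hStep_apply_of_ne j d hx h]

theorem qStep_weights {j : ℕ+} {d : ℕ+ →₀ ℕ} (hd : ∀ n, tWeight n ∣ d n) (n : ℕ+) :
    tWeight n ∣ qStep j d n := by
  by_cases h₁ : n = j
  · subst h₁; rw [qStep_apply_self]; exact dvd_add (hd n) (tWeight_dvd_eight n)
  by_cases h₂ : n = j + 3
  · subst h₂; rw [tWeight_add_three]; exact one_dvd _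
  rw [qStep_apply_of_ne j d h₁ h₂]; exact hd n

theorem hStep_weights {j : ℕ+} {d : ℕ+ →₀ ℕ} (hd : ∀ n, tWeight n ∣ d n) (n : ℕ+) :
    tWeight n ∣ hStep j d n := by
  by_cases h₁ : n = j
  · subst h₁; rw [hStep_apply_self]; exact Nat.dvd_sub (hd n) (tWeight_dvd_eight n)
  by_cases h₂ : n = j + 3
  · subst h₂; rw [tWeight_add_three]; exact one_dvd _
  rw [hStep_apply_of_ne j d h₁ h₂]; exact hd n

def oddShifts (d : ℕ+ →₀ ℕ) : Finset ℕ+ :=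
  (d.support.preimage (· + 3) (add_left_injective 3).injOn).filter fun j => Odd (d (j + 3))

theorem mem_oddShifts {d : ℕ+ →₀ ℕ} {j : ℕ+} : j ∈ oddShifts d ↔ Odd (d (j + 3)) := by
  simp only [oddShifts, Finset.mem_filter, Finset.mem_preimage, Finsupp.mem_support_iff,
    and_iff_right_iff_imp]
  exact fun h => h.pos.ne'

theorem oddShifts_hStep {j : ℕ+} {d : ℕ+ →₀ ℕ} (hj : ¬ Odd (d (j + 3))) (h8 : 8 ≤ d j) :
    oddShifts (hStep j d) = insert j (oddShifts d) := by
  ext i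
  rw [Finset.mem_insert, mem_oddShifts, mem_oddShifts]
  by_cases hi : i = j
  · subst hi; simp [hStep_apply_add_three, Nat.odd_add_one, hj]
  · rw [odd_hStep_apply_iff (by simpa using hi) h8]; simp [hi]

theorem Q2_monomial {d : ℕ+ →₀ ℕ} (hd : ∀ n, tWeight n ∣ d n) :
    Q2 (monomial d 1) = ∑ j ∈ oddShifts d, monomial (qStep j d) 1 := by
  have hQ : Q2 (monomial d 1) =
      ∑ n ∈ d.support, monomial (d - Finsupp.single n 1) (d n : F) * z (n - 3) ^ 8 := by
    simp [Q2, mkDerivation_monomial, Finsupp.sum]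
  -- the factors `ζ₁, ζ₂` contribute `ζ₋₂⁸ = ζ₋₁⁸ = 0`, and `ζ₃` has even exponent
  rw [hQ, ← Finset.sum_preimage (· + 3) d.support (add_left_injective 3).injOn _ ?low,
    oddShifts, Finset.sum_filter]
  case low =>
    intro n _ hn
    rcases eq_one_or_eq_two_or_eq_three_or_exists_add_three n with rfl | rfl | rfl | ⟨m, rfl⟩
    · simp [z]
    · simp [z]
    · have h3 : ((d 3 : ℕ) : F) = 0 :=
        ZMod.natCast_eq_zero_iff_even.2 (even_iff_two_dvd.2 (by simpa [tWeight] using hd 3))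
      rw [h3, monomial_zero, zero_mul]
    · exact absurd ⟨m, rfl⟩ hn
  refine Finset.sum_congr rfl fun j _ => ?_
  have hz : z (((j + 3 : ℕ+) : ℤ) - 3) = X j := by rw [← z_coe]; congr 1; push_cast; ring
  rw [hz, X_pow_eq_monomial, monomial_mul, mul_one, ← qStep]
  split_ifs with h
  · rw [ZMod.natCast_eq_one_iff_odd.2 h]
  · rw [ZMod.natCast_eq_zero_iff_even.2 (Nat.not_odd_iff_even.1 h), monomial_zero]

theorem Q2_mem_T {x : A} (hx : x ∈ T) : Q2 x ∈ T := by
  refine map_mem_of_forall_monomial_mem Q2 (Subalgebra.toSubmodule T) fun d hd => ?_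
  rw [Q2_monomial (mem_T_iff.1 hx d hd)]
  exact Submodule.sum_mem _ fun j _ => monomial_one_mem_T (qStep_weights (mem_T_iff.1 hx d hd))

theorem Q2_eq_zero_of_mem_C2 {x : A} (hx : x ∈ C2) : Q2 x = 0 := by
  refine eq_of_forall_monomial_eq Q2 0 fun d hd => ?_
  have hd' := mem_C2_iff.1 hx d hd
  rw [Q2_monomial fun n => (tWeight_dvd_c2Weight n).trans (hd' n), LinearMap.zero_apply]
  refine Finset.sum_eq_zero fun j hj => absurd (mem_oddShifts.1 hj) ?_
  rw [Nat.not_odd_iff_even, even_iff_two_dvd]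
  simpa [c2Weight_add_three] using hd' (j + 3)

/-- The monomial `ζ^d` is paired at `j` with `ζ^(qStep j d)` (if `d_{j+3}` is odd) or with
`ζ^(hStep j d)` (if `d_j ≥ 8`). -/
def IsPaired (d : ℕ+ →₀ ℕ) (j : ℕ+) : Prop := Odd (d (j + 3)) ∨ 8 ≤ d j

theorem isPaired_qStep_self (j : ℕ+) (d : ℕ+ →₀ ℕ) : IsPaired (qStep j d) j :=
  Or.inr (by simp)

theorem isPaired_qStep_iff_of_lt {i j : ℕ+} (d : ℕ+ →₀ ℕ) (h : i < j) :
    IsPaired (qStep j d) i ↔ IsPaired d i := by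
  have hj3 : i < j + 3 := h.trans (PNat.lt_add_right j 3)
  rw [IsPaired, IsPaired, odd_qStep_apply_iff d (by simpa using h.ne),
    qStep_apply_of_ne j d h.ne hj3.ne]

section Homotopy

open scoped Classical

theorem find_qStep {j : ℕ+} {d : ℕ+ →₀ ℕ} (h : ∃ i, IsPaired d i)
    (h' : ∃ i, IsPaired (qStep j d) i) (hj : PNat.find h ≤ j) : PNat.find h' = PNat.find h := by
  rw [PNat.find_eq_iff]
  refine ⟨?_, fun i hi => ?_⟩
  · rcases hj.eq_or_lt with hj | hj
    · rw [hj]; exact isPaired_qStep_self j d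
    · exact (isPaired_qStep_iff_of_lt d hj).2 (PNat.find_spec h)
  · rw [isPaired_qStep_iff_of_lt d (hi.trans_le hj)]
    exact PNat.find_min h hi

def reduce : A →ₗ[F] A :=
  (basisMonomials ℕ+ F).constr F fun d => if ∃ j, IsPaired d j then 0 else monomial d 1

def homotopy : A →ₗ[F] A :=
  (basisMonomials ℕ+ F).constr F fun d =>
    if h : ∃ j, IsPaired d j then
      if Odd (d (PNat.find h + 3)) then 0 else monomial (hStep (PNat.find h) d) 1
    else 0

variable {d : ℕ+ →₀ ℕ}

theorem reduce_monomial_of_isPaired {j : ℕ+} (h : IsPaired d j) : reduce (monomial d 1) = 0 := by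
  rw [reduce, constr_basisMonomials_monomial, if_pos ⟨j, h⟩]

theorem reduce_monomial_of_forall (h : ∀ j, ¬ IsPaired d j) :
    reduce (monomial d 1) = monomial d 1 := by
  rw [reduce, constr_basisMonomials_monomial, if_neg (not_exists.2 h)]

theorem homotopy_monomial_of_forall (h : ∀ j, ¬ IsPaired d j) : homotopy (monomial d 1) = 0 := by
  rw [homotopy, constr_basisMonomials_monomial, dif_neg (not_exists.2 h)]

theorem homotopy_monomial (h : ∃ j, IsPaired d j) :
    homotopy (monomial d 1) =
      if Odd (d (PNat.find h + 3)) then 0 else monomial (hStep (PNat.find h) d) 1 := by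
  rw [homotopy, constr_basisMonomials_monomial, dif_pos h]

theorem homotopy_monomial_qStep {j : ℕ+} (h : ∃ i, IsPaired d i) (hj : PNat.find h ≤ j) :
    homotopy (monomial (qStep j d) 1) =
      if Odd (qStep j d (PNat.find h + 3)) then 0
      else monomial (hStep (PNat.find h) (qStep j d)) 1 := by
  have h' : ∃ i, IsPaired (qStep j d) i := ⟨j, isPaired_qStep_self j d⟩
  rw [homotopy_monomial h', find_qStep h h' hj]

theorem homotopy_Q2_monomial_of_odd (hd : ∀ n, tWeight n ∣ d n) (h : ∃ j, IsPaired d j)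
    (hodd : Odd (d (PNat.find h + 3))) : homotopy (Q2 (monomial d 1)) = monomial d 1 := by
  rw [Q2_monomial hd, map_sum, Finset.sum_eq_single (PNat.find h)]
  · rw [homotopy_monomial_qStep h le_rfl, qStep_apply_add_three,
      if_neg (by rw [Nat.odd_sub hodd.pos]; simpa using hodd), hStep_qStep hodd.pos]
  · intro j hj hne
    have hlt : PNat.find h < j :=
      (PNat.find_min' h (Or.inl (mem_oddShifts.1 hj))).lt_of_ne (Ne.symm hne)
    rw [homotopy_monomial_qStep h hlt.le,
      if_pos ((odd_qStep_apply_iff d (by simpa using hlt.ne)).2 hodd)]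
  · exact fun hn => absurd (mem_oddShifts.2 hodd) hn

theorem homotopy_identity_monomial_of_even (hd : ∀ n, tWeight n ∣ d n) (h : ∃ j, IsPaired d j)
    (heven : ¬ Odd (d (PNat.find h + 3))) :
    Q2 (homotopy (monomial d 1)) + homotopy (Q2 (monomial d 1)) = monomial d 1 := by
  set J := PNat.find h
  have h8 : 8 ≤ d J := (PNat.find_spec h).resolve_left heven
  have hcomm : ∀ j ∈ oddShifts d,
      homotopy (monomial (qStep j d) 1) = monomial (qStep j (hStep J d)) 1 := by
    intro j hj
    have hne : J ≠ j := fun hJj => heven (hJj ▸ mem_oddShifts.1 hj)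
    have hlt : J < j := (PNat.find_min' h (Or.inl (mem_oddShifts.1 hj))).lt_of_ne hne
    rw [homotopy_monomial_qStep h hlt.le,
      if_neg (by rwa [odd_qStep_apply_iff d (by simpa using hne)]), hStep_qStep_comm hne]
  rw [homotopy_monomial h, if_neg heven, Q2_monomial (hStep_weights hd), oddShifts_hStep heven h8,
    Finset.sum_insert (mt mem_oddShifts.1 heven), qStep_hStep h8, Q2_monomial hd, map_sum,
    Finset.sum_congr rfl hcomm, add_assoc, CharTwo.add_self_eq_zero, add_zero]

theorem homotopy_identity_monomial (hd : ∀ n, tWeight n ∣ d n) :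
    Q2 (homotopy (monomial d 1)) + homotopy (Q2 (monomial d 1)) =
      monomial d 1 + reduce (monomial d 1) := by
  by_cases h : ∃ j, IsPaired d j
  · rw [reduce_monomial_of_isPaired (PNat.find_spec h), add_zero]
    by_cases hodd : Odd (d (PNat.find h + 3))
    · rw [homotopy_monomial h, if_pos hodd, map_zero, zero_add,
        homotopy_Q2_monomial_of_odd hd h hodd]
    · exact homotopy_identity_monomial_of_even hd h hodd
  · rw [not_exists] at h
    have hempty : oddShifts d = ∅ :=
      Finset.eq_empty_of_forall_notMem fun j hj => h j (Or.inl (mem_oddShifts.1 hj))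
    rw [homotopy_monomial_of_forall h, reduce_monomial_of_forall h, Q2_monomial hd, hempty,
      Finset.sum_empty, map_zero, map_zero, add_zero, CharTwo.add_self_eq_zero]

theorem homotopy_mem_T {x : A} (hx : x ∈ T) : homotopy x ∈ T := by
  refine map_mem_of_forall_monomial_mem homotopy (Subalgebra.toSubmodule T) fun d hd => ?_
  by_cases h : ∃ j, IsPaired d j
  · rw [homotopy_monomial h]
    split_ifs
    · exact zero_mem _
    · exact monomial_one_mem_T (hStep_weights (mem_T_iff.1 hx d hd))
  · rw [homotopy_monomial_of_forall (not_exists.1 h)]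
    exact zero_mem _

end Homotopy

theorem homotopy_identity {x : A} (hx : x ∈ T) :
    Q2 (homotopy x) + homotopy (Q2 x) = x + reduce x :=
  eq_of_forall_monomial_eq (Q2 ∘ₗ homotopy + homotopy ∘ₗ Q2) (LinearMap.id + reduce)
    fun d hd => homotopy_identity_monomial (mem_T_iff.1 hx d hd)

theorem c2Weight_dvd_of_forall_not_isPaired {d : ℕ+ →₀ ℕ} (hd : ∀ n, tWeight n ∣ d n)
    (h : ∀ j, ¬ IsPaired d j) (n : ℕ+) : c2Weight n ∣ d n := by
  rcases eq_one_or_eq_two_or_eq_three_or_exists_add_three n with rfl | rfl | rfl | ⟨m, rfl⟩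
  · have h1 : d 1 < 8 := not_le.1 fun h8 => h 1 (Or.inr h8)
    have h8 : 8 ∣ d 1 := by simpa [tWeight] using hd 1
    simp [c2Weight]
    omega
  · simpa [tWeight, c2Weight] using hd 2
  · simpa [tWeight, c2Weight] using hd 3
  · rw [c2Weight_add_three, ← even_iff_two_dvd, ← Nat.not_odd_iff_even]
    exact fun hodd => h m (Or.inl hodd)

theorem reduce_mem_C2 {x : A} (hx : x ∈ T) : reduce x ∈ C2 := by
  refine map_mem_of_forall_monomial_mem reduce (Subalgebra.toSubmodule C2) fun d hd => ?_
  by_cases h : ∃ j, IsPaired d j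
  · obtain ⟨j, hj⟩ := h
    rw [reduce_monomial_of_isPaired hj]
    exact zero_mem _
  · rw [not_exists] at h
    rw [reduce_monomial_of_forall h]
    exact monomial_one_mem_C2 (c2Weight_dvd_of_forall_not_isPaired (mem_T_iff.1 hx d hd) h)

theorem reduce_Q2 {x : A} (hx : x ∈ T) : reduce (Q2 x) = 0 :=
  eq_of_forall_monomial_eq (reduce ∘ₗ Q2) 0 fun d hd => by
    rw [LinearMap.comp_apply, Q2_monomial (mem_T_iff.1 hx d hd), map_sum, LinearMap.zero_apply]
    exact Finset.sum_eq_zero fun j _ => reduce_monomial_of_isPaired (isPaired_qStep_self j d)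

def boundaryGens : Set A := {a | ∃ f ∈ C2, ∃ g : ℤ, 2 ≤ g ∧ a = f * z g ^ 8}

theorem monomial_mem_boundaryGens {d : ℕ+ →₀ ℕ} (hd : ∀ n, c2Weight n ∣ d n) {j : ℕ+}
    (hj : IsPaired d j) : monomial d 1 ∈ boundaryGens := by
  have h8 : 8 ≤ d j := hj.resolve_left <| Nat.not_odd_iff_even.2 <| even_iff_two_dvd.2 <| by
    simpa [c2Weight_add_three] using hd (j + 3)
  have hj1 : j ≠ 1 := by
    rintro rfl
    have : d 1 = 0 := by simpa [c2Weight] using hd 1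
    omega
  refine ⟨monomial (d - Finsupp.single j 8) 1, monomial_one_mem_C2 fun n => ?_, j, ?_, ?_⟩
  · by_cases hn : n = j
    · subst hn
      rw [Finsupp.tsub_apply, Finsupp.single_eq_same]
      exact Nat.dvd_sub (hd n) (c2Weight_dvd_eight hj1)
    · simpa [Finsupp.single_apply, Ne.symm hn] using hd n
  · have : (j : ℕ) ≠ 1 := fun h => hj1 (PNat.coe_eq_one_iff.1 h)
    have := j.pos
    omega
  · rw [z_coe, X_pow_eq_monomial, monomial_mul, one_mul,
      tsub_add_cancel_of_le (Finsupp.single_le_iff.2 h8)]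

theorem add_reduce_mem_span_boundaryGens {c : A} (hc : c ∈ C2) :
    c + reduce c ∈ Submodule.span F boundaryGens := by
  refine map_mem_of_forall_monomial_mem (LinearMap.id + reduce) _ fun d hd => ?_
  rw [LinearMap.add_apply, LinearMap.id_apply]
  by_cases h : ∃ j, IsPaired d j
  · obtain ⟨j, hj⟩ := h
    rw [reduce_monomial_of_isPaired hj, add_zero]
    exact Submodule.subset_span (monomial_mem_boundaryGens (mem_C2_iff.1 hc d hd) hj)
  · rw [reduce_monomial_of_forall (not_exists.1 h), CharTwo.add_self_eq_zero]
    exact zero_mem _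

theorem exists_sum_of_mem_span_boundaryGens {c : A} (hc : c ∈ Submodule.span F boundaryGens) :
    ∃ (k : ℕ) (f : Fin k → A) (g : Fin k → ℤ),
      (∀ i, f i ∈ C2 ∧ 2 ≤ g i) ∧ c = ∑ i, f i * z (g i) ^ 8 := by
  obtain ⟨k, r, b, rfl⟩ := Submodule.mem_span_set'.1 hc
  choose f hf g hg hb using fun i => (b i).2
  refine ⟨k, fun i => r i • f i, g, fun i => ⟨C2.smul_mem (hf i) _, hg i⟩,
    Finset.sum_congr rfl fun i _ => ?_⟩
  rw [hb i, smul_mul_assoc]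

/-- `Q₂` Margolis homology of `tmf`.
`Q₂` restricts to `T` with `Q₂ ∘ Q₂ = 0`, the subalgebra `C2 = F₂[ζ₂⁴, ζ₃², ζ₄², …]` is
contained in `ker(Q₂|T)`, the induced algebra map `C2 → M(T, Q₂)` is surjective, and its
kernel is the ideal of `C2` generated by `{ζ₂⁸} ∪ {ζᵢ⁸ : i ≥ 3}` (an element `c ∈ C2` is a
boundary iff it is a finite sum `Σ fᵢ · ζ_{gᵢ}⁸` with `fᵢ ∈ C2`, `gᵢ ≥ 2`); hence
`M(T, Q₂) ≅ F₂[ζ₂⁴, ζ₃², ζ₄², …]/(ζ₂⁸, ζ₃⁸, ζ₄⁸, …)` as `F₂`-algebras. -/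
theorem Q2_margolis_tmf :
    (∀ x ∈ T, Q2 x ∈ T) ∧
    (∀ x ∈ T, Q2 (Q2 x) = 0) ∧
    (∀ x ∈ C2, x ∈ T ∧ Q2 x = 0) ∧
    (∀ x ∈ T, Q2 x = 0 → ∃ c ∈ C2, ∃ y ∈ T, x = c + Q2 y) ∧
    (∀ c ∈ C2, ((∃ y ∈ T, Q2 y = c) ↔
      ∃ (k : ℕ) (f : Fin k → A) (g : Fin k → ℤ),
        (∀ i, f i ∈ C2 ∧ 2 ≤ g i) ∧ c = ∑ i, f i * z (g i) ^ 8)) := by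
  refine ⟨fun x hx => Q2_mem_T hx, fun x _ => Q2_Q2 x,
    fun x hx => ⟨C2_le_T hx, Q2_eq_zero_of_mem_C2 hx⟩, fun x hx hQ => ?_,
    fun c hc => ⟨?_, ?_⟩⟩
  · refine ⟨reduce x, reduce_mem_C2 hx, homotopy x, homotopy_mem_T hx, ?_⟩
    have h := homotopy_identity hx
    rw [hQ, map_zero, add_zero] at h
    rw [h, add_left_comm, CharTwo.add_self_eq_zero, add_zero]
  · rintro ⟨y, hy, rfl⟩
    apply exists_sum_of_mem_span_boundaryGens
    simpa [reduce_Q2 hy] using add_reduce_mem_span_boundaryGens hc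
  · rintro ⟨k, f, g, hfg, rfl⟩
    refine ⟨∑ i, f i * z (g i + 3),
      sum_mem fun i _ => mul_mem (C2_le_T (hfg i).1) (z_mem_T (by linarith [(hfg i).2])), ?_⟩
    rw [map_sum]
    exact Finset.sum_congr rfl fun i _ =>
      Q2_mul_z_add_three (Q2_eq_zero_of_mem_C2 (hfg i).1) (by linarith [(hfg i).2])

end Tmf

end
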